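/- (Reversible work, Eq. (10).) In the setting of Theorem 1 — β > 0, H : ℝ → Matrix n n ℂ a continuously differentiable family of Hermitian matrices, ρ : ℝ → Matrix n n ℂ a continuously differentiable family of positive definite density matrices, with ΔW = ∫₀^τ Re tr(ρ_t · H'_t) dt, ΔQ = ∫₀^τ Re tr(ρ'_t · H_t) dt, Δ_iS = S(ρ_τ) − S(ρ_0) − β·ΔQ, ΔI = S(ρ_τ‖ρ^β_τ) − S(ρ_0‖ρ^β_0), ΔF^β = F^β_τ − F^β_0 — if the process is reversible, i.e. Δ_iS = 0, then ΔW = (1/β)·ΔI + ΔF^β. -/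

import Mathlib

open scoped ComplexOrder

attribute [local instance] Matrix.normedAddCommGroup Matrix.normedSpace

/-- The matrix exponential of an `n × n` complex matrix. -/
noncomputable def matExp {n : ℕ} (A : Matrix (Fin n) (Fin n) ℂ) : Matrix (Fin n) (Fin n) ℂ :=
  NormedSpace.exp A

/-- The matrix logarithm, given by the continuous functional calculus (the real
logarithm applied to the eigenvalues of a Hermitian matrix). -/
noncomputable def matLog {n : ℕ} (A : Matrix (Fin n) (Fin n) ℂ) : Matrix (Fin n) (Fin n) ℂ :=
  cfc Real.log A

/-- The von Neumann entropy `S(ρ) = −Re tr(ρ log ρ)`. -/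
noncomputable def vnEntropy {n : ℕ} (ρ : Matrix (Fin n) (Fin n) ℂ) : ℝ :=
  -(Matrix.trace (ρ * matLog ρ)).re

/-- The relative entropy `S(ρ‖σ) = Re tr(ρ log ρ) − Re tr(ρ log σ)`. -/
noncomputable def relEntropy {n : ℕ} (ρ σ : Matrix (Fin n) (Fin n) ℂ) : ℝ :=
  (Matrix.trace (ρ * matLog ρ)).re - (Matrix.trace (ρ * matLog σ)).re

/-- The partition function `Z = Re tr(exp(−βH))`. -/
noncomputable def partZ {n : ℕ} (β : ℝ) (H : Matrix (Fin n) (Fin n) ℂ) : ℝ :=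
  (Matrix.trace (matExp ((-β) • H))).re

/-- The Gibbs state `ρ^β = exp(−βH)/Z`. -/
noncomputable def gibbs {n : ℕ} (β : ℝ) (H : Matrix (Fin n) (Fin n) ℂ) :
    Matrix (Fin n) (Fin n) ℂ :=
  (partZ β H)⁻¹ • matExp ((-β) • H)

/-!
Since `log ρ^β = -βH - log Z`, the relative entropy to the Gibbs state is
`S(ρ‖ρ^β) = -S(ρ) + β Re tr(ρH) + log Z`, so `(1/β)ΔI + ΔF^β = -(1/β)ΔS + ΔU` with
`U = Re tr(ρH)`. The product rule for `tr(ρ_t H_t)` gives `ΔU = ΔW + ΔQ`, and reversibility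
means `ΔS = βΔQ`.
-/

section TraceCalculus

variable {ι : Type*} [Fintype ι] {f g : ℝ → Matrix ι ι ℂ} {f' g' : Matrix ι ι ℂ} {x : ℝ}

theorem HasDerivAt.matrix_trace_mul (hf : HasDerivAt f f' x) (hg : HasDerivAt g g' x) :
    HasDerivAt (fun y => (f y * g y).trace) ((f' * g x).trace + (f x * g').trace) x := by
  have hentry : ∀ {h : ℝ → Matrix ι ι ℂ} {h'}, HasDerivAt h h' x → ∀ i j,
      HasDerivAt (fun y => h y i j) (h' i j) x := fun hh i j =>
    hasDerivAt_pi.1 (hasDerivAt_pi.1 hh i) j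
  simpa only [Matrix.trace, Matrix.diag, Matrix.mul_apply, ← Finset.sum_add_distrib] using
    HasDerivAt.fun_sum fun i _ => HasDerivAt.fun_sum fun j _ =>
      (hentry hf i j).fun_mul (hentry hg j i)

theorem integral_re_trace_deriv_mul_add_integral_re_trace_mul_deriv
    (hf : ContDiff ℝ 1 f) (hg : ContDiff ℝ 1 g) (a b : ℝ) :
    (∫ t in a..b, (deriv f t * g t).trace.re) + ∫ t in a..b, (f t * deriv g t).trace.re
      = (f b * g b).trace.re - (f a * g a).trace.re := by
  have hcont₁ : Continuous fun t => (deriv f t * g t).trace.re :=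
    Complex.continuous_re.comp ((hf.continuous_deriv le_rfl).matrix_mul hg.continuous).matrix_trace
  have hcont₂ : Continuous fun t => (f t * deriv g t).trace.re :=
    Complex.continuous_re.comp (hf.continuous.matrix_mul (hg.continuous_deriv le_rfl)).matrix_trace
  rw [← intervalIntegral.integral_add (hcont₁.intervalIntegrable _ _)
    (hcont₂.intervalIntegrable _ _)]
  refine intervalIntegral.integral_eq_sub_of_hasDerivAt (f := fun t => (f t * g t).trace.re)
    (fun t _ => ?_) ((hcont₁.fun_add hcont₂).intervalIntegrable _ _)
  have := Complex.reCLM.hasFDerivAt.comp_hasDerivAt t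
      ((hf.differentiable one_ne_zero t).hasDerivAt.matrix_trace_mul
        (hg.differentiable one_ne_zero t).hasDerivAt)
  simp only [Function.comp_def, Complex.reCLM_apply, Complex.add_re] at this
  exact this

end TraceCalculus

section Gibbs

open scoped MatrixOrder

variable {n : ℕ}

-- The CFC lemmas on `exp` and `log` need a normed-ring structure; the `L2` operator norm
-- provides one whose topology is the entrywise one.
theorem matExp_eq_cfc_exp {A : Matrix (Fin n) (Fin n) ℂ} (hA : A.IsHermitian) :
    matExp A = cfc Real.exp A := by
  open scoped Matrix.Norms.L2Operator in
  exact (CFC.real_exp_eq_normedSpace_exp hA).symm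

theorem isStrictlyPositive_matExp {A : Matrix (Fin n) (Fin n) ℂ} (hA : A.IsHermitian) :
    IsStrictlyPositive (matExp A) := by
  rw [matExp_eq_cfc_exp hA]
  exact (cfc_isStrictlyPositive_iff Real.exp A).mpr fun x _ => Real.exp_pos x

theorem partZ_pos [Nonempty (Fin n)] (β : ℝ) {H : Matrix (Fin n) (Fin n) ℂ}
    (hH : H.IsHermitian) : 0 < partZ β H :=
  (Complex.pos_iff.mp
    (Matrix.IsStrictlyPositive.posDef
      (isStrictlyPositive_matExp (hH.smul (IsSelfAdjoint.all (-β))))).trace_pos).1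

theorem matLog_gibbs [Nonempty (Fin n)] (β : ℝ) {H : Matrix (Fin n) (Fin n) ℂ}
    (hH : H.IsHermitian) :
    matLog (gibbs β H) = algebraMap ℝ _ (-Real.log (partZ β H)) + (-β) • H := by
  have hA : ((-β) • H).IsHermitian := hH.smul (IsSelfAdjoint.all (-β))
  open scoped Matrix.Norms.L2Operator in
  have := CFC.log_smul' (NormedSpace.exp ((-β) • H)) (inv_pos.mpr (partZ_pos β hH))
    (isStrictlyPositive_matExp hA)
  rw [CFC.log_exp _ hA, Real.log_inv] at this
  exact this

theorem relEntropy_gibbs {β : ℝ} {ρ H : Matrix (Fin n) (Fin n) ℂ} (hH : H.IsHermitian)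
    (hρ : ρ.trace = 1) :
    relEntropy ρ (gibbs β H)
      = -vnEntropy ρ + β * (ρ * H).trace.re + Real.log (partZ β H) := by
  have : Nonempty (Fin n) := by
    by_contra h
    rw [not_nonempty_iff] at h
    simp [Matrix.trace] at hρ
  rw [relEntropy, vnEntropy, matLog_gibbs β hH, Algebra.algebraMap_eq_smul_one, mul_add,
    Matrix.trace_add, Matrix.mul_smul, Matrix.mul_smul, mul_one, Matrix.trace_smul,
    Matrix.trace_smul, hρ]
  simp only [Complex.add_re, Complex.smul_re, smul_eq_mul, Complex.one_re]
  ring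

end Gibbs

theorem reversible_work_eq_general {n : ℕ}
    (β : ℝ) (hβ : 0 < β) (H ρ : ℝ → Matrix (Fin n) (Fin n) ℂ)
    (hH : ContDiff ℝ 1 H) (hHherm : ∀ t, (H t).IsHermitian)
    (hρ : ContDiff ℝ 1 ρ)
    (hρtr : ∀ t, Matrix.trace (ρ t) = 1)
    (τ : ℝ)
    (ΔW ΔQ ΔiS ΔI ΔFβ : ℝ)
    (hW : ΔW = ∫ t in (0:ℝ)..τ, (Matrix.trace (ρ t * deriv H t)).re)
    (hQ : ΔQ = ∫ t in (0:ℝ)..τ, (Matrix.trace (deriv ρ t * H t)).re)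
    (hiS : ΔiS = (vnEntropy (ρ τ) - vnEntropy (ρ 0)) - β * ΔQ)
    (hI : ΔI = relEntropy (ρ τ) (gibbs β (H τ)) - relEntropy (ρ 0) (gibbs β (H 0)))
    (hF : ΔFβ = (-(1 / β) * Real.log (partZ β (H τ))) - (-(1 / β) * Real.log (partZ β (H 0))))
    (hrev : ΔiS = 0) :
    ΔW = (1 / β) * ΔI + ΔFβ := by
  have hfirstLaw := integral_re_trace_deriv_mul_add_integral_re_trace_mul_deriv hρ hH 0 τ
  rw [← hQ, ← hW] at hfirstLaw
  rw [relEntropy_gibbs (hHherm τ) (hρtr τ), relEntropy_gibbs (hHherm 0) (hρtr 0)] at hI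
  rw [hI, hF]
  field_simp
  linear_combination β * hfirstLaw - hiS + hrev

/-- **Reversible work (Eq. (10)).**
In the setting of Theorem 1, if the process is reversible, i.e. the entropy
production vanishes (`ΔiS = 0`), then `ΔW = (1/β)·ΔI + ΔF^β`. -/
theorem reversible_work_eq {n : ℕ} (hn : 0 < n)
    (β : ℝ) (hβ : 0 < β) (H ρ : ℝ → Matrix (Fin n) (Fin n) ℂ)
    (hH : ContDiff ℝ 1 H) (hHherm : ∀ t, (H t).IsHermitian)
    (hρ : ContDiff ℝ 1 ρ)
    (hρpos : ∀ t, (ρ t).PosDef) (hρtr : ∀ t, Matrix.trace (ρ t) = 1)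
    (τ : ℝ) (hτ : 0 ≤ τ)
    (ΔW ΔQ ΔiS ΔI ΔFβ : ℝ)
    (hW : ΔW = ∫ t in (0:ℝ)..τ, (Matrix.trace (ρ t * deriv H t)).re)
    (hQ : ΔQ = ∫ t in (0:ℝ)..τ, (Matrix.trace (deriv ρ t * H t)).re)
    (hiS : ΔiS = (vnEntropy (ρ τ) - vnEntropy (ρ 0)) - β * ΔQ)
    (hI : ΔI = relEntropy (ρ τ) (gibbs β (H τ)) - relEntropy (ρ 0) (gibbs β (H 0)))
    (hF : ΔFβ = (-(1 / β) * Real.log (partZ β (H τ))) - (-(1 / β) * Real.log (partZ β (H 0))))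
    (hrev : ΔiS = 0) :
    ΔW = (1 / β) * ΔI + ΔFβ :=
  reversible_work_eq_general β hβ H ρ hH hHherm hρ hρtr τ ΔW ΔQ ΔiS ΔI ΔFβ hW hQ hiS hI hF hrev
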